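/- Fix d ≥ 1, n ≥ 1, σ > 0, C_K > 0, R_f > 0, c_0 > 0, ε, δ ∈ (0,1), a query point x_0 ∈ ℝ^d, and a measurable kernel K_σ : ℝ^d × ℝ^d → ℝ with |K_σ(x,x')| ≤ σ^{−d}·C_K. Let Z = ℝ^d × [−R_f, R_f]. For a dataset X ∈ Z^n define d_σ(x_0,X) = Σ_j K_σ(x_0, x_j), define θ̂(X) = Π_{R_f}( Σ_j K_σ(x_0,x_j) y_j / d_σ(x_0,X) ) when d_σ(x_0,X) ≠ 0 and θ̂(X) = 0 otherwise, where Π_{R_f}(t) = (R_f/max(|t|,R_f))·t; define γ(X) = (σ^d/(2C_K))·max( d_σ(x_0,X) − c_0·n − 2σ^{−d}C_K, 0 ); and set α = 8 R_f C_K/(σ^d c_0 n). Then for any probability measure π_⊥ on ℝ, the ePTR mechanism built from (ε, δ, α, θ̂, γ, π_⊥) is (ε,δ)-differentially private. -/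

import Mathlib

open MeasureTheory ProbabilityTheory Matrix
open scoped Classical NNReal ENNReal RealInnerProductSpace

noncomputable section

namespace EPTR

variable {Z : Type*}

/-- Hamming distance between two datasets of size `n`. -/
def hDist {n : ℕ} (X X' : Fin n → Z) : ℕ :=
  (Finset.univ.filter fun i => X i ≠ X' i).card

/-- Two datasets are neighbors if they differ in exactly one coordinate. -/
def Neighbor {n : ℕ} (X X' : Fin n → Z) : Prop := hDist X X' = 1

/-- Gaussian measure on Euclidean space with mean `m` and covariance `v • I`
(the product of one-dimensional Gaussians of variance `v`). -/
def gaussianE {ι : Type*} [Fintype ι] (m : EuclideanSpace ℝ ι) (v : ℝ≥0) :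
    Measure (EuclideanSpace ℝ ι) :=
  (Measure.pi fun i => gaussianReal (m i) v).map (MeasurableEquiv.toLp 2 (ι → ℝ))

/-- The threshold shift `M = 1 + (2/ε) log (max (1/δ) (1/ε))` of the ePTR mechanism. -/
def Mshift (ε δ : ℝ) : ℝ := 1 + 2 / ε * Real.log (max (1 / δ) (1 / ε))

/-- The release probability of the ePTR mechanism at sub-distance value `g`. -/
def relProb (ε δ g : ℝ) : ℝ :=
  Real.exp (ε * (g - Mshift ε δ) / 2) / (Real.exp (ε * (g - Mshift ε δ) / 2) + 1)

/-- The standard deviation `s = (2α/ε)√(2 log(1.25/δ))` of the ePTR Gaussian noise. -/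
def noiseSD (ε δ α : ℝ) : ℝ := 2 * α / ε * Real.sqrt (2 * Real.log (1.25 / δ))

/-- Output distribution of the ePTR mechanism on input dataset `X`
(Euclidean-space valued version). -/
def ePTR {n : ℕ} {ι : Type*} [Fintype ι] (ε δ α : ℝ)
    (θhat : (Fin n → Z) → EuclideanSpace ℝ ι) (γ : (Fin n → Z) → ℝ)
    (πbot : Measure (EuclideanSpace ℝ ι)) (X : Fin n → Z) :
    Measure (EuclideanSpace ℝ ι) :=
  ENNReal.ofReal (relProb ε δ (γ X)) • gaussianE (θhat X) (Real.toNNReal (noiseSD ε δ α ^ 2))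
    + ENNReal.ofReal (1 - relProb ε δ (γ X)) • πbot

/-- Output distribution of the ePTR mechanism on input dataset `X` (real valued version). -/
def ePTR1 {n : ℕ} (ε δ α : ℝ)
    (θhat : (Fin n → Z) → ℝ) (γ : (Fin n → Z) → ℝ)
    (πbot : Measure ℝ) (X : Fin n → Z) : Measure ℝ :=
  ENNReal.ofReal (relProb ε δ (γ X)) • gaussianReal (θhat X) (Real.toNNReal (noiseSD ε δ α ^ 2))
    + ENNReal.ofReal (1 - relProb ε δ (γ X)) • πbot

/-- `(ε, δ)`-differential privacy of a mechanism: for all neighboring datasets `X, X'`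
and all measurable events `B`, `μ_X(B) ≤ e^ε μ_{X'}(B) + δ`. -/
def IsDP {n : ℕ} {Ω : Type*} [MeasurableSpace Ω]
    (mech : (Fin n → Z) → Measure Ω) (ε δ : ℝ) : Prop :=
  ∀ X X' : Fin n → Z, Neighbor X X' → ∀ B : Set Ω, MeasurableSet B →
    mech X B ≤ ENNReal.ofReal (Real.exp ε) * mech X' B + ENNReal.ofReal δ

/-- Projection onto the closed ball of radius `a` in a normed space:
`proj a v = (a / max ‖v‖ a) • v`. -/
def proj {V : Type*} [NormedAddCommGroup V] [Module ℝ V] (a : ℝ) (v : V) : V :=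
  (a / max ‖v‖ a) • v

/-- Identification of `Fin p → ℝ` with Euclidean space. -/
def toE {p : ℕ} : (Fin p → ℝ) → EuclideanSpace ℝ (Fin p) :=
  ⇑(EuclideanSpace.equiv (Fin p) ℝ).symm

/-- ℓ²-operator norm of a square matrix. -/
def opNorm {p : ℕ} (A : Matrix (Fin p) (Fin p) ℝ) : ℝ :=
  ‖Matrix.toEuclideanCLM (𝕜 := ℝ) A‖

/-- Smallest eigenvalue of a (symmetric) matrix, via the Rayleigh quotient. -/
def lambdaMin {p : ℕ} (A : Matrix (Fin p) (Fin p) ℝ) : ℝ :=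
  ⨅ v : Metric.sphere (0 : EuclideanSpace ℝ (Fin p)) 1,
    ⟪Matrix.toEuclideanCLM (𝕜 := ℝ) A v.1, v.1⟫

/-- Index set of data points carrying label `k`. -/
def Ik {n K : ℕ} {E : Type*} (X : Fin n → E × Fin K) (k : Fin K) : Finset (Fin n) :=
  Finset.univ.filter fun j => (X j).2 = k

/-- Class-`k` sample frequency `μ̂_k = |I_k| / n`. -/
def classFreq {n K : ℕ} {E : Type*} (X : Fin n → E × Fin K) (k : Fin K) : ℝ :=
  (Ik X k).card / n

/-- Class-`k` sample mean (equal to `0` if the class is empty). -/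
def classMean {n K p : ℕ} (X : Fin n → EuclideanSpace ℝ (Fin p) × Fin K) (k : Fin K) :
    EuclideanSpace ℝ (Fin p) :=
  ((Ik X k).card : ℝ)⁻¹ • ∑ j ∈ Ik X k, (X j).1

/-- The sub-distance of the ePTR Bayes classifier:
`γ(X) = max(min_k |I_k(X)| - c₀ n - 1, 0)`. -/
def gammaBC {n K : ℕ} {E : Type*} (c0 : ℝ) (X : Fin n → E × Fin K) : ℝ :=
  max (((⨅ k : Fin K, (Ik X k).card : ℕ) : ℝ) - c0 * n - 1) 0

end EPTR

/-!
The release probability `p(γ) = e^{ε(γ-M)/2} / (e^{ε(γ-M)/2} + 1)` is logistic, so when `γ`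
moves by at most `1` both `p` and `1 - p` change by a factor at most `e^{ε/2}`, and `p(γ) ≤ δ`
once `γ ≤ 0` by the choice of `M`. Since `d_σ` has sensitivity `b = 2σ^{-d}C_K` and
`σ^d/(2C_K) · b = 1`, the function `γ` is `1`-sensitive. If `γ(X) > 0` then
`d_σ(x₀, X) > c₀n + b`, so both denominators exceed `c₀n`, and clipping the numerator to
`[-R_f d, R_f d]` shows that the clipped estimator moves by at most `2R_f b/(c₀n) ≤ α`. For such
a shift the Gaussian densities with deviation `s` differ by a factor at most `e^{ε/2}` outside a
one-sided tail of mass at most `δ`. The two factors `e^{ε/2}` multiply to `e^ε`.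
-/

open MeasureTheory ProbabilityTheory Real Set

namespace EPTR

section ReleaseProbability

lemma exp_div_exp_add_one_le_exp_mul {a a' c : ℝ} (hc : 0 ≤ c) (h : a ≤ a' + c) :
    exp a / (exp a + 1) ≤ exp c * (exp a' / (exp a' + 1)) := by
  rw [mul_div_assoc', div_le_div_iff₀ (by positivity) (by positivity)]
  have h₁ : exp a ≤ exp c * exp a' := by rw [← exp_add]; exact exp_le_exp.mpr (by linarith)
  have h₂ : 1 ≤ exp c := one_le_exp hc
  nlinarith [mul_pos (exp_pos a) (exp_pos a')]

variable {ε δ : ℝ}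

lemma relProb_le_one (g : ℝ) : relProb ε δ g ≤ 1 :=
  div_le_one_of_le₀ (by linarith) (by positivity)

lemma one_sub_relProb (g : ℝ) :
    1 - relProb ε δ g
      = exp (-(ε * (g - Mshift ε δ) / 2)) / (exp (-(ε * (g - Mshift ε δ) / 2)) + 1) := by
  rw [relProb, exp_neg]
  field_simp
  ring

lemma relProb_le_exp_mul {g g' : ℝ} (hε : 0 ≤ ε) (h : g ≤ g' + 1) :
    relProb ε δ g ≤ exp (ε / 2) * relProb ε δ g' :=
  exp_div_exp_add_one_le_exp_mul (by positivity) (by nlinarith)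

lemma one_sub_relProb_le_exp_mul {g g' : ℝ} (hε : 0 ≤ ε) (h : g' ≤ g + 1) :
    1 - relProb ε δ g ≤ exp (ε / 2) * (1 - relProb ε δ g') := by
  rw [one_sub_relProb, one_sub_relProb]
  exact exp_div_exp_add_one_le_exp_mul (by positivity) (by nlinarith)

lemma relProb_le_of_nonpos {g : ℝ} (hε : 0 < ε) (hδ : 0 < δ) (hg : g ≤ 0) :
    relProb ε δ g ≤ δ := by
  have hexp : ε * (g - Mshift ε δ) / 2 ≤ log δ := by
    have hlog : -log δ ≤ log (max (1 / δ) (1 / ε)) := by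
      rw [← log_inv, ← one_div]; exact log_le_log (by positivity) (le_max_left _ _)
    have : ε * (g - Mshift ε δ) / 2 = ε * g / 2 - ε / 2 - log (max (1 / δ) (1 / ε)) := by
      rw [Mshift]; field_simp; ring
    nlinarith [mul_nonpos_of_nonneg_of_nonpos hε.le hg]
  calc relProb ε δ g ≤ exp (ε * (g - Mshift ε δ) / 2) :=
        div_le_self (exp_nonneg _) (by linarith [exp_pos (ε * (g - Mshift ε δ) / 2)])
    _ ≤ δ := (exp_le_exp.mpr hexp).trans_eq (exp_log hδ)

end ReleaseProbability

section Gaussian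

variable {v : ℝ≥0}

lemma gaussianReal_inter_le_exp_mul {m m' c : ℝ} (hv : v ≠ 0) {S : Set ℝ}
    (hS : ∀ x ∈ S, ((x - m') ^ 2 - (x - m) ^ 2) / (2 * v) ≤ c) (B : Set ℝ) :
    gaussianReal m v (B ∩ S) ≤ ENNReal.ofReal (exp c) * gaussianReal m' v B := by
  have hpdf : ∀ x ∈ B ∩ S,
      gaussianPDF m v x ≤ ENNReal.ofReal (exp c) * gaussianPDF m' v x := by
    intro x hx
    rw [gaussianPDF, gaussianPDF, ← ENNReal.ofReal_mul (exp_nonneg c)]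
    refine ENNReal.ofReal_le_ofReal ?_
    rw [gaussianPDFReal, gaussianPDFReal, mul_left_comm, ← exp_add]
    gcongr
    have hx' := hS x hx.2
    have : -(x - m) ^ 2 / (2 * v)
        = -(x - m') ^ 2 / (2 * v) + ((x - m') ^ 2 - (x - m) ^ 2) / (2 * v) := by ring
    linarith
  calc gaussianReal m v (B ∩ S) = ∫⁻ x in B ∩ S, gaussianPDF m v x :=
        gaussianReal_apply m hv _
    _ ≤ ∫⁻ x in B ∩ S, ENNReal.ofReal (exp c) * gaussianPDF m' v x :=
      setLIntegral_mono (by fun_prop) hpdf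
    _ = ENNReal.ofReal (exp c) * gaussianReal m' v (B ∩ S) := by
      rw [lintegral_const_mul _ (measurable_gaussianPDF _ _), gaussianReal_apply m' hv]
    _ ≤ ENNReal.ofReal (exp c) * gaussianReal m' v B := by gcongr; exact inter_subset_left

lemma gaussianReal_Ici_self (m : ℝ) (hv : v ≠ 0) : gaussianReal m v (Ici m) = 2⁻¹ := by
  have hsymm : gaussianReal m v (Iic m) = gaussianReal m v (Ici m) := by
    have h := gaussianReal_map_const_sub (μ := m) (v := v) (2 * m)
    rw [show 2 * m - m = m by ring] at h
    conv_lhs => rw [← h]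
    rw [Measure.map_apply (by fun_prop) measurableSet_Iic]
    congr 1
    ext x
    simp only [mem_preimage, mem_Iic, mem_Ici]
    constructor <;> intro <;> linarith
  have := nullSingletonClass_gaussianReal (μ := m) hv
  have h := measure_union_add_inter (μ := gaussianReal m v) (Iic m) (measurableSet_Ici (a := m))
  rw [Iic_union_Ici, Iic_inter_Ici, Icc_self, measure_univ, measure_singleton, add_zero,
    hsymm, ← two_mul] at h
  exact ENNReal.eq_inv_of_mul_eq_one_left (by rw [mul_comm, h])

lemma gaussianReal_Ici_add_le (m : ℝ) (hv : v ≠ 0) {t : ℝ} (ht : 0 ≤ t) :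
    gaussianReal m v (Ici (m + t)) ≤ ENNReal.ofReal (exp (-t ^ 2 / (2 * v))) * 2⁻¹ := by
  calc gaussianReal m v (Ici (m + t)) = gaussianReal m v (Ici (m + t) ∩ Ici (m + t)) := by
        rw [inter_self]
    _ ≤ ENNReal.ofReal (exp (-t ^ 2 / (2 * v))) * gaussianReal (m + t) v (Ici (m + t)) := by
        refine gaussianReal_inter_le_exp_mul hv (fun x hx => ?_) _
        gcongr
        nlinarith [mem_Ici.mp hx]
    _ = _ := by rw [gaussianReal_Ici_self _ hv]

lemma gaussianReal_le_exp_mul_add_tail {m m' ε t : ℝ} (hv : v ≠ 0) (hm : m' < m)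
    (ht0 : 0 ≤ t) (ht : 2 * (m - m') * t + (m - m') ^ 2 ≤ ε * v) (B : Set ℝ) :
    gaussianReal m v B
      ≤ ENNReal.ofReal (exp (ε / 2)) * gaussianReal m' v B
        + ENNReal.ofReal (exp (-t ^ 2 / (2 * v))) * 2⁻¹ := by
  have hv0 : (0 : ℝ) < v := NNReal.coe_pos.mpr (pos_iff_ne_zero.mpr hv)
  calc gaussianReal m v B
      ≤ gaussianReal m v (B ∩ Iic (m + t)) + gaussianReal m v (Ici (m + t)) :=
        (measure_mono fun x hx => (le_total x (m + t)).imp (fun h => ⟨hx, h⟩) id).trans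
          (measure_union_le _ _)
    _ ≤ _ := by
        gcongr
        · refine gaussianReal_inter_le_exp_mul hv (fun x hx => ?_) B
          rw [div_le_iff₀ (by positivity)]
          nlinarith [mul_nonneg (sub_nonneg.mpr (mem_Iic.mp hx)) (sub_pos.mpr hm).le]
        · exact gaussianReal_Ici_add_le m hv ht0

lemma gaussianReal_apply_eq_neg (m : ℝ) (v : ℝ≥0) (B : Set ℝ) :
    gaussianReal m v B = gaussianReal (-m) v (Neg.neg ⁻¹' B) := by
  conv_lhs => rw [← neg_neg m, ← gaussianReal_map_neg]
  exact (MeasurableEquiv.neg ℝ).map_apply B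

end Gaussian

section GaussianNoise

variable {ε δ α : ℝ}

lemma one_fifth_le_log_div (hδ : 0 < δ) (hδ1 : δ ≤ 1) : 1 / 5 ≤ log (1.25 / δ) := by
  have h := one_sub_inv_le_log_of_pos (x := 1.25 / δ) (by positivity)
  rw [inv_div] at h
  have : δ / 1.25 ≤ 4 / 5 := by rw [div_le_iff₀ (by norm_num)]; linarith
  linarith

lemma exp_neg_sq_div_le (hε : 0 < ε) (hε1 : ε ≤ 1) (hδ : 0 < δ) (hδ1 : δ ≤ 1) :
    exp (-(8 * log (1.25 / δ) - ε) ^ 2 / (64 * log (1.25 / δ))) ≤ 2 * δ := by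
  have hL := one_fifth_le_log_div hδ hδ1
  set L := log (1.25 / δ)
  have h₁ : -(8 * L - ε) ^ 2 / (64 * L) ≤ ε / 4 - L := by
    rw [div_le_iff₀ (by positivity)]; nlinarith [sq_nonneg ε]
  have h₂ : exp (ε / 4) ≤ 4 / 3 :=
    (exp_bound_div_one_sub_of_interval (by positivity) (by linarith)).trans
      (by rw [div_le_div_iff₀ (by linarith) (by norm_num)]; linarith)
  have h₃ : exp (-L) = δ / 1.25 := by rw [Real.exp_neg, exp_log (by positivity), inv_div]
  calc exp (-(8 * L - ε) ^ 2 / (64 * L)) ≤ exp (ε / 4 - L) := exp_le_exp.mpr h₁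
    _ = exp (ε / 4) * (δ / 1.25) := by rw [sub_eq_add_neg, exp_add, h₃]
    _ ≤ 4 / 3 * (δ / 1.25) := by gcongr
    _ ≤ 2 * δ := by norm_num; linarith

lemma gaussianReal_noiseSD_le_of_lt {m m' : ℝ} (hε : 0 < ε) (hε1 : ε ≤ 1) (hδ : 0 < δ)
    (hδ1 : δ ≤ 1) (hm : m' < m) (hmα : m - m' ≤ α) (B : Set ℝ) :
    gaussianReal m (noiseSD ε δ α ^ 2).toNNReal B
      ≤ ENNReal.ofReal (exp (ε / 2)) * gaussianReal m' (noiseSD ε δ α ^ 2).toNNReal B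
        + ENNReal.ofReal δ := by
  have hL := one_fifth_le_log_div hδ hδ1
  set L := log (1.25 / δ)
  have hα : 0 < α := by linarith
  set v := (noiseSD ε δ α ^ 2).toNNReal
  have hv : (v : ℝ) = 8 * α ^ 2 * L / ε ^ 2 := by
    rw [Real.coe_toNNReal _ (sq_nonneg _), noiseSD, mul_pow,
      sq_sqrt (by linarith : (0 : ℝ) ≤ 2 * L)]
    ring
  have hv0 : v ≠ 0 := by rw [← NNReal.coe_ne_zero, hv]; positivity
  -- with this threshold `α` cancels from the tail exponent `t ^ 2 / (2 * v)`
  set t := α * (8 * L - ε) / (2 * ε) with ht_def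
  have ht0 : 0 ≤ t := div_nonneg (mul_nonneg hα.le (by linarith)) (by positivity)
  have ht : 2 * (m - m') * t + (m - m') ^ 2 ≤ ε * v := by
    have h : ε * v - (2 * (m - m') * t + (m - m') ^ 2)
        = (α - (m - m')) * (8 * L * α + ε * (m - m')) / ε := by
      rw [ht_def, hv]; field_simp; ring
    have : 0 ≤ (α - (m - m')) * (8 * L * α + ε * (m - m')) / ε :=
      div_nonneg (mul_nonneg (by linarith) (by nlinarith)) hε.le
    linarith
  have htail : -t ^ 2 / (2 * v) = -(8 * L - ε) ^ 2 / (64 * L) := by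
    rw [ht_def, hv]; field_simp; ring
  calc gaussianReal m v B
      ≤ ENNReal.ofReal (exp (ε / 2)) * gaussianReal m' v B
        + ENNReal.ofReal (exp (-t ^ 2 / (2 * v))) * 2⁻¹ :=
        gaussianReal_le_exp_mul_add_tail hv0 hm ht0 ht B
    _ ≤ _ := by
        gcongr
        rw [← div_eq_mul_inv, ENNReal.div_le_iff two_ne_zero ENNReal.ofNat_ne_top,
          ← ENNReal.ofReal_ofNat 2, ← ENNReal.ofReal_mul hδ.le, htail]
        exact ENNReal.ofReal_le_ofReal
          ((exp_neg_sq_div_le hε hε1 hδ hδ1).trans_eq (mul_comm _ _))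

lemma gaussianReal_noiseSD_le {m m' : ℝ} (hε : 0 < ε) (hε1 : ε ≤ 1) (hδ : 0 < δ)
    (hδ1 : δ ≤ 1) (hm : |m - m'| ≤ α) (B : Set ℝ) :
    gaussianReal m (noiseSD ε δ α ^ 2).toNNReal B
      ≤ ENNReal.ofReal (exp (ε / 2)) * gaussianReal m' (noiseSD ε δ α ^ 2).toNNReal B
        + ENNReal.ofReal δ := by
  rcases lt_trichotomy m' m with h | rfl | h
  · exact gaussianReal_noiseSD_le_of_lt hε hε1 hδ hδ1 h ((le_abs_self _).trans hm) B
  · exact le_add_right (le_mul_of_one_le_left zero_le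
      (ENNReal.one_le_ofReal.mpr (one_le_exp (by positivity))))
  · rw [gaussianReal_apply_eq_neg m, gaussianReal_apply_eq_neg m']
    refine gaussianReal_noiseSD_le_of_lt hε hε1 hδ hδ1 (neg_lt_neg h) ?_ _
    linarith [neg_abs_le (m - m')]

end GaussianNoise

section Clamp

variable {R : ℝ}

lemma proj_eq_max_min (hR : 0 < R) (t : ℝ) : proj R t = max (-R) (min R t) := by
  rw [proj, Real.norm_eq_abs, smul_eq_mul]
  rcases le_or_gt |t| R with h | h
  · obtain ⟨h₁, h₂⟩ := abs_le.mp h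
    rw [max_eq_right h, div_self hR.ne', one_mul, min_eq_right h₂, max_eq_right h₁]
  · rw [max_eq_left h.le]
    rcases lt_abs.mp h with h' | h'
    · rw [abs_of_pos (by linarith), div_mul_cancel₀ _ (by linarith), min_eq_left h'.le,
        max_eq_right (by linarith)]
    · rw [abs_of_neg (by linarith), min_eq_right (by linarith), max_eq_left (by linarith),
        div_neg, neg_mul, div_mul_cancel₀ _ (by linarith)]

lemma abs_proj_le (hR : 0 < R) (t : ℝ) : |proj R t| ≤ R := by
  rw [proj_eq_max_min hR]
  exact abs_le.mpr ⟨le_max_left _ _, max_le (by linarith) (min_le_left _ _)⟩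

lemma proj_div_eq {A D : ℝ} (hR : 0 < R) (hD : 0 < D) :
    proj R (A / D) = max (-(R * D)) (min (R * D) A) / D := by
  rw [proj_eq_max_min hR, ← max_div_div_right hD.le, ← min_div_div_right hD.le, neg_div,
    mul_div_cancel_right₀ _ hD.ne']

/-- Clamping the ratio to `[-R, R]` is clamping the numerator to `[-RD, RD]`, and the latter is
`1`-Lipschitz jointly in the numerator and the threshold. -/
lemma abs_proj_div_sub_proj_div_le {A A' D D' b c : ℝ} (hR : 0 < R) (hc : 0 < c) (hD : 0 < D)
    (hD' : c ≤ D') (hA : |A - A'| ≤ R * b) (hDD' : |D - D'| ≤ b) :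
    |proj R (A / D) - proj R (A' / D')| ≤ 2 * R * b / c := by
  have hD'0 : 0 < D' := hc.trans_le hD'
  set u := max (-(R * D)) (min (R * D) A)
  set u' := max (-(R * D')) (min (R * D') A')
  have hRD : |R * D - R * D'| ≤ R * b := by
    rw [← mul_sub, abs_mul, abs_of_pos hR]; gcongr
  have huu' : |u - u'| ≤ R * b := by
    refine (abs_max_sub_max_le_max _ _ _ _).trans (max_le ?_ ?_)
    · rwa [neg_sub_neg, abs_sub_comm]
    · exact (abs_min_sub_min_le_max _ _ _ _).trans (max_le hRD hA)
  have hu : |u / D| ≤ R := proj_div_eq (A := A) hR hD ▸ abs_proj_le hR _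
  have hsplit : u / D - u' / D' = ((u - u') + u / D * (D' - D)) / D' := by
    field_simp; ring
  rw [proj_div_eq hR hD, proj_div_eq hR hD'0, hsplit, abs_div, abs_of_pos hD'0]
  calc |(u - u') + u / D * (D' - D)| / D' ≤ (R * b + R * b) / D' := by
        gcongr
        refine (abs_add_le _ _).trans (add_le_add huu' ?_)
        rw [abs_mul, abs_sub_comm]
        exact mul_le_mul hu hDD' (abs_nonneg _) hR.le
    _ ≤ 2 * R * b / c := by
        rw [← two_mul, ← mul_assoc]
        exact div_le_div_of_nonneg_left (by nlinarith [(abs_nonneg _).trans hA]) hc hD'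

lemma abs_ite_proj_div_sub_ite_proj_div_le {A A' D D' b c : ℝ} (hR : 0 < R) (hc : 0 < c)
    (hDc : c + b < D) (hA : |A - A'| ≤ R * b) (hDD' : |D - D'| ≤ b) :
    |(if D ≠ 0 then proj R (A / D) else 0) - (if D' ≠ 0 then proj R (A' / D') else 0)|
      ≤ 2 * R * b / c := by
  have hb : 0 ≤ b := (abs_nonneg _).trans hDD'
  have hD' : c ≤ D' := by linarith [(abs_le.mp hDD').2]
  rw [if_pos (by linarith), if_pos (by linarith)]
  exact abs_proj_div_sub_proj_div_le hR hc (by linarith) hD' hA hDD'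

end Clamp

section Neighbor

variable {Z : Type*} {n : ℕ} {X X' : Fin n → Z}

lemma Neighbor.one_le (h : Neighbor X X') : 1 ≤ n :=
  h ▸ (Finset.card_filter_le _ _).trans (Finset.card_fin n).le

lemma Neighbor.exists_forall_ne_eq (h : Neighbor X X') : ∃ i, ∀ j ≠ i, X j = X' j := by
  obtain ⟨i, hi⟩ := Finset.card_eq_one.mp h
  refine ⟨i, fun j hj => by_contra fun hne => hj ?_⟩
  rw [← Finset.mem_singleton, ← hi]
  simpa using hne

lemma Neighbor.abs_sum_sub_sum_le (h : Neighbor X X') {f : Z → ℝ} {C : ℝ}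
    (hf : ∀ z, |f z| ≤ C) : |∑ j, f (X j) - ∑ j, f (X' j)| ≤ 2 * C := by
  obtain ⟨i, hi⟩ := h.exists_forall_ne_eq
  rw [← Finset.sum_sub_distrib, Finset.sum_eq_single i (fun j _ hj => by rw [hi j hj, sub_self])
    (fun h => absurd (Finset.mem_univ i) h), two_mul]
  exact (abs_sub _ _).trans (add_le_add (hf _) (hf _))

end Neighbor

theorem isDP_ePTR1 {Z : Type*} {n : ℕ} {ε δ α : ℝ} (hε : 0 < ε) (hε1 : ε ≤ 1)
    (hδ : 0 < δ) (hδ1 : δ ≤ 1) {θ γ : (Fin n → Z) → ℝ} (πbot : Measure ℝ)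
    (hγ : ∀ X X', Neighbor X X' → |γ X - γ X'| ≤ 1)
    (hθ : ∀ X X', Neighbor X X' → 0 < γ X → |θ X - θ X'| ≤ α) :
    IsDP (ePTR1 ε δ α θ γ πbot) ε δ := by
  intro X X' hXX' B _
  set p := relProb ε δ (γ X)
  set p' := relProb ε δ (γ X')
  set N := gaussianReal (θ X) (noiseSD ε δ α ^ 2).toNNReal
  set N' := gaussianReal (θ X') (noiseSD ε δ α ^ 2).toNNReal
  set E := ENNReal.ofReal (exp (ε / 2))
  have hE : ENNReal.ofReal (exp ε) = E * E := by
    rw [← ENNReal.ofReal_mul (exp_nonneg _), ← exp_add, add_halves]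
  have hE1 : 1 ≤ E := ENNReal.one_le_ofReal.mpr (one_le_exp (by positivity))
  obtain ⟨hγ₁, hγ₂⟩ := abs_le.mp (hγ X X' hXX')
  have hpp' : ENNReal.ofReal p ≤ E * ENNReal.ofReal p' := by
    rw [← ENNReal.ofReal_mul (exp_nonneg _)]
    exact ENNReal.ofReal_le_ofReal (relProb_le_exp_mul hε.le (by linarith))
  have hqq' : ENNReal.ofReal (1 - p) ≤ E * ENNReal.ofReal (1 - p') := by
    rw [← ENNReal.ofReal_mul (exp_nonneg _)]
    exact ENNReal.ofReal_le_ofReal (one_sub_relProb_le_exp_mul hε.le (by linarith))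
  have hrel :
      ENNReal.ofReal p * N B ≤ E * E * (ENNReal.ofReal p' * N' B) + ENNReal.ofReal δ := by
    rcases le_or_gt (γ X) 0 with hγX | hγX
    · calc ENNReal.ofReal p * N B ≤ ENNReal.ofReal p := mul_le_of_le_one_right' prob_le_one
        _ ≤ ENNReal.ofReal δ := ENNReal.ofReal_le_ofReal (relProb_le_of_nonpos hε hδ hγX)
        _ ≤ _ := le_add_self
    · have hN := gaussianReal_noiseSD_le hε hε1 hδ hδ1 (hθ X X' hXX' hγX) B
      calc ENNReal.ofReal p * N B ≤ ENNReal.ofReal p * (E * N' B + ENNReal.ofReal δ) := by gcongr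
        _ ≤ ENNReal.ofReal p * (E * N' B) + ENNReal.ofReal δ := by
          rw [mul_add]
          gcongr
          exact mul_le_of_le_one_left' (ENNReal.ofReal_le_one.mpr (relProb_le_one _))
        _ ≤ E * ENNReal.ofReal p' * (E * N' B) + ENNReal.ofReal δ := by gcongr
        _ = E * E * (ENNReal.ofReal p' * N' B) + ENNReal.ofReal δ := by ring
  have hbot : ENNReal.ofReal (1 - p) * πbot B ≤ E * E * (ENNReal.ofReal (1 - p') * πbot B) := by
    calc ENNReal.ofReal (1 - p) * πbot B ≤ E * (ENNReal.ofReal (1 - p') * πbot B) := by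
          rw [← mul_assoc]; gcongr
      _ ≤ E * E * (ENNReal.ofReal (1 - p') * πbot B) := by
          rw [mul_assoc]; exact mul_le_mul' le_rfl (le_mul_of_one_le_left zero_le hE1)
  simp only [ePTR1, Measure.add_apply, Measure.smul_apply, smul_eq_mul]
  calc ENNReal.ofReal p * N B + ENNReal.ofReal (1 - p) * πbot B
      ≤ E * E * (ENNReal.ofReal p' * N' B) + ENNReal.ofReal δ
        + E * E * (ENNReal.ofReal (1 - p') * πbot B) := add_le_add hrel hbot
    _ = _ := by rw [hE]; ring

end EPTR

theorem nw_ePTR_isDP_general {d n : ℕ}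
    {σ CK Rf c0 ε δ : ℝ} (hσ : 0 < σ) (hCK : 0 < CK) (hRf : 0 < Rf) (hc0 : 0 < c0)
    (hε : ε ∈ Set.Ioo (0 : ℝ) 1) (hδ : δ ∈ Set.Ioo (0 : ℝ) 1)
    (x0 : EuclideanSpace ℝ (Fin d))
    (Kσ : EuclideanSpace ℝ (Fin d) → EuclideanSpace ℝ (Fin d) → ℝ)
    (hKb : ∀ x x', |Kσ x x'| ≤ σ ^ (-(d : ℤ)) * CK)
    (πbot : Measure ℝ) :
    EPTR.IsDP (n := n)
      (Z := EuclideanSpace ℝ (Fin d) × {y : ℝ // y ∈ Set.Icc (-Rf) Rf})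
      (EPTR.ePTR1 ε δ (8 * Rf * CK / (σ ^ d * c0 * n))
        (fun X =>
          if (∑ j, Kσ x0 (X j).1) ≠ 0 then
            EPTR.proj Rf ((∑ j, Kσ x0 (X j).1 * ((X j).2 : ℝ)) / ∑ j, Kσ x0 (X j).1)
          else 0)
        (fun X =>
          σ ^ d / (2 * CK) *
            max ((∑ j, Kσ x0 (X j).1) - c0 * n - 2 * σ ^ (-(d : ℤ)) * CK) 0)
        πbot) ε δ := by
  set b := 2 * σ ^ (-(d : ℤ)) * CK with hb
  have hb_eq : b = 2 * CK / σ ^ d := by rw [hb, _root_.zpow_neg, zpow_natCast]; ring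
  refine EPTR.isDP_ePTR1 hε.1 hε.2.le hδ.1 hδ.2.le πbot (fun X X' h => ?_)
    (fun X X' h hγ => ?_)
  all_goals have hD : |∑ j, Kσ x0 (X j).1 - ∑ j, Kσ x0 (X' j).1| ≤ b :=
    (h.abs_sum_sub_sum_le fun z => hKb x0 z.1).trans_eq (by rw [hb]; ring)
  · rw [← mul_sub, abs_mul, abs_of_pos (by positivity)]
    calc _ ≤ σ ^ d / (2 * CK) * b := by
          gcongr
          refine (abs_max_sub_max_le_abs _ _ _).trans ?_
          rwa [sub_sub_sub_cancel_right, sub_sub_sub_cancel_right]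
      _ = 1 := by rw [hb_eq]; field_simp
  · have hA :
        |∑ j, Kσ x0 (X j).1 * (X j).2 - ∑ j, Kσ x0 (X' j).1 * (X' j).2| ≤ Rf * b := by
      refine (h.abs_sum_sub_sum_le (f := fun z => Kσ x0 z.1 * z.2)
        (C := σ ^ (-(d : ℤ)) * CK * Rf) fun z => ?_).trans ?_
      · rw [abs_mul]
        exact mul_le_mul (hKb _ _) (abs_le.mpr z.2.2) (abs_nonneg _) (by positivity)
      · exact le_of_eq (by rw [hb]; ring)
    have hn : (0 : ℝ) < n := by exact_mod_cast h.one_le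
    have hDc : c0 * n + b < ∑ j, Kσ x0 (X j).1 := by
      have := (lt_max_iff.mp (pos_of_mul_pos_right hγ (by positivity))).resolve_right (lt_irrefl 0)
      linarith
    refine (EPTR.abs_ite_proj_div_sub_ite_proj_div_le hRf (by positivity) hDc hA hD).trans ?_
    calc 2 * Rf * b / (c0 * n) = 4 * Rf * CK / (σ ^ d * c0 * n) := by
          rw [hb_eq]; field_simp; ring
      _ ≤ 8 * Rf * CK / (σ ^ d * c0 * n) := by gcongr; norm_num

/-- Theorem 5.1 (the ePTR Nadaraya–Watson mechanism is DP): over datasets in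
`Z = ℝ^d × [-R_f, R_f]`, the ePTR mechanism with the clipped NW estimator, sub-distance
`γ(X) = (σ^d/(2C_K)) max(d_σ(x₀, X) - c₀n - 2σ^{-d}C_K, 0)` and sensitivity level
`α = 8R_fC_K/(σ^d c₀ n)` is `(ε, δ)`-differentially private. -/
theorem nw_ePTR_isDP {d n : ℕ} (hd : 1 ≤ d) (hn : 1 ≤ n)
    {σ CK Rf c0 ε δ : ℝ} (hσ : 0 < σ) (hCK : 0 < CK) (hRf : 0 < Rf) (hc0 : 0 < c0)
    (hε : ε ∈ Set.Ioo (0 : ℝ) 1) (hδ : δ ∈ Set.Ioo (0 : ℝ) 1)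
    (x0 : EuclideanSpace ℝ (Fin d))
    (Kσ : EuclideanSpace ℝ (Fin d) → EuclideanSpace ℝ (Fin d) → ℝ)
    (hKmeas : Measurable fun z : EuclideanSpace ℝ (Fin d) × EuclideanSpace ℝ (Fin d) =>
      Kσ z.1 z.2)
    (hKb : ∀ x x', |Kσ x x'| ≤ σ ^ (-(d : ℤ)) * CK)
    (πbot : Measure ℝ) [IsProbabilityMeasure πbot] :
    EPTR.IsDP (n := n)
      (Z := EuclideanSpace ℝ (Fin d) × {y : ℝ // y ∈ Set.Icc (-Rf) Rf})
      (EPTR.ePTR1 ε δ (8 * Rf * CK / (σ ^ d * c0 * n))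
        (fun X =>
          if (∑ j, Kσ x0 (X j).1) ≠ 0 then
            EPTR.proj Rf ((∑ j, Kσ x0 (X j).1 * ((X j).2 : ℝ)) / ∑ j, Kσ x0 (X j).1)
          else 0)
        (fun X =>
          σ ^ d / (2 * CK) *
            max ((∑ j, Kσ x0 (X j).1) - c0 * n - 2 * σ ^ (-(d : ℤ)) * CK) 0)
        πbot) ε δ :=
  nw_ePTR_isDP_general hσ hCK hRf hc0 hε hδ x0 Kσ hKb πbot
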